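/- Let F be a field with char(F) > d or char(F) = 0. Let f = Σ_{i=1}^s ∏_{j=1}^d L_{i,j} be a sum of products of homogeneous linear forms in F[x_1,...,x_n], and let f^{nc} = Σ_{i=1}^s Σ_{σ ∈ S_d} L_{i,σ(1)} L_{i,σ(2)} ⋯ L_{i,σ(d)} be the corresponding noncommutative polynomial in F⟨X_1,...,X_n⟩ (multiplication in the free algebra, linear forms lifted with the same coefficients). Then f ≡ 0 if and only if f^{nc} ≡ 0. -/

import Mathlib

/-!
Expanding both products, `f = ∑ₖ c k • x^(e k)` and
`fⁿᶜ = ∑ₖ (∑ σ, c (k ∘ σ)) • X_{k 0} ⋯ X_{k (d-1)}`, where `k` runs over words `Fin d → Fin n`,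
`c = wordCoeff a` and `e = tupleExponent` is the exponent vector of a word. The orbit of `k`
under `S_d` is the fibre of `e` through `k`, and its stabiliser is `∏ᵢ S_{(e k) i}`, so
`∑ σ, c (k ∘ σ) = (e k)! • [x^(e k)] f`. Since every `(e k) i ≤ d < char F`, the factor `(e k)!`
is nonzero in `F`, hence `fⁿᶜ` and `f` vanish together.
-/

open MvPolynomial

/-- The (commutative) linear form `L = ∑ i, a i * x i`. -/
noncomputable def lin {F : Type*} [Field F] {n : ℕ} (a : Fin n → F) :
    MvPolynomial (Fin n) F :=
  ∑ i, MvPolynomial.C (a i) * MvPolynomial.X i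

/-- The lift of the linear form with coefficients `a` to the free (noncommutative)
algebra, realized as `MonoidAlgebra F (FreeMonoid (Fin n))`. -/
noncomputable def linNC {F : Type*} [Field F] {n : ℕ} (a : Fin n → F) :
    MonoidAlgebra F (FreeMonoid (Fin n)) :=
  ∑ i, MonoidAlgebra.single (FreeMonoid.of i) (a i)

open Finset Equiv Nat

section Exponent

variable {α ι : Type*} [Fintype α]

noncomputable def tupleExponent (k : α → ι) : ι →₀ ℕ :=
  ∑ a, Finsupp.single (k a) 1

theorem tupleExponent_apply [DecidableEq ι] (k : α → ι) (i : ι) :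
    tupleExponent k i = Fintype.card {a // k a = i} := by
  simp [tupleExponent, Finsupp.finsetSum_apply, Finsupp.single_apply, Fintype.card_subtype]

theorem tupleExponent_comp_perm (k : α → ι) (σ : Perm α) :
    tupleExponent (k ∘ σ) = tupleExponent k :=
  Equiv.sum_comp σ fun a => Finsupp.single (k a) 1

theorem exists_perm_comp_eq_of_tupleExponent_eq [DecidableEq ι] {k k' : α → ι}
    (h : tupleExponent k = tupleExponent k') : ∃ σ : Perm α, k' ∘ σ = k := by
  have hcard i : Fintype.card {a // k a = i} = Fintype.card {a // k' a = i} := by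
    rw [← tupleExponent_apply, ← tupleExponent_apply, h]
  -- match the fibres of `k` and `k'` over each value bijectively
  let σ := (sigmaFiberEquiv k).symm.trans
    ((sigmaCongrRight fun i => Fintype.equivOfCardEq (hcard i)).trans (sigmaFiberEquiv k'))
  exact ⟨σ, funext fun a => (Fintype.equivOfCardEq (hcard (k a)) ⟨a, rfl⟩).2⟩

variable [DecidableEq α] [DecidableEq ι] [Fintype ι]

theorem card_perm_comp_eq_prod_factorial {k k₀ : α → ι}
    (h : tupleExponent k = tupleExponent k₀) :
    #{σ : Perm α | k₀ ∘ σ = k} = ∏ i, (tupleExponent k₀ i)! := by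
  obtain ⟨σ₀, hσ₀⟩ := exists_perm_comp_eq_of_tupleExponent_eq h
  have hcoset : {σ : Perm α // k₀ ∘ σ = k₀} ≃ {σ : Perm α // k₀ ∘ σ = k} :=
    (Equiv.mulRight σ₀).subtypeEquiv fun σ => by
      rw [← hσ₀, coe_mulRight, Perm.coe_mul, ← Function.comp_assoc]
      exact σ₀.surjective.injective_comp_right.eq_iff.symm
  rw [← Fintype.card_subtype, ← Fintype.card_congr hcoset, DomMulAct.stabilizer_card]
  simp only [tupleExponent_apply]

theorem sum_perm_comp_eq_nsmul_sum {M : Type*} [AddCommMonoid M] (g : (α → ι) → M)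
    (k₀ : α → ι) :
    ∑ σ : Perm α, g (k₀ ∘ σ)
      = (∏ i, (tupleExponent k₀ i)!) • ∑ k with tupleExponent k = tupleExponent k₀, g k := by
  have horbit : univ.image (fun σ : Perm α => k₀ ∘ σ)
      = ({k | tupleExponent k = tupleExponent k₀} : Finset (α → ι)) := by
    ext k
    simp only [mem_image, mem_univ, true_and, mem_filter]
    exact ⟨fun ⟨σ, hσ⟩ => hσ ▸ tupleExponent_comp_perm k₀ σ,
      fun h => exists_perm_comp_eq_of_tupleExponent_eq h⟩
  rw [Finset.sum_comp, horbit, smul_sum]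
  refine sum_congr rfl fun k hk => ?_
  rw [card_perm_comp_eq_prod_factorial (mem_filter.mp hk).2]

end Exponent

theorem cast_factorial_ne_zero {F : Type*} [Field F] {e : ℕ}
    (hchar : ringChar F = 0 ∨ e < ringChar F) : (e ! : F) ≠ 0 := by
  rw [Ne, ringChar.spec]
  rcases hchar with h0 | hlt
  · simpa [h0] using e.factorial_ne_zero
  · have hp : (ringChar F).Prime :=
      (CharP.char_is_prime_or_zero F _).resolve_right (by omega)
    rw [hp.dvd_factorial]
    omega

theorem cast_prod_factorial_tupleExponent_ne_zero {F α ι : Type*} [Field F] [Fintype α]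
    [DecidableEq ι] [Fintype ι] (hchar : ringChar F = 0 ∨ Fintype.card α < ringChar F)
    (k : α → ι) : ((∏ i, (tupleExponent k i)! : ℕ) : F) ≠ 0 := by
  rw [Nat.cast_prod, prod_ne_zero_iff]
  intro i _
  refine cast_factorial_ne_zero (hchar.imp_right fun h => lt_of_le_of_lt ?_ h)
  rw [tupleExponent_apply]
  exact Fintype.card_subtype_le _

theorem sum_monomial_tupleExponent_eq_zero_iff {R α ι : Type*} [CommSemiring R] [Fintype α]
    [DecidableEq α] [Fintype ι] [DecidableEq ι] (g : (α → ι) → R) :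
    ∑ k, monomial (tupleExponent k) (g k) = 0 ↔
      ∀ k₀ : α → ι, ∑ k with tupleExponent k = tupleExponent k₀, g k = 0 := by
  simp_rw [MvPolynomial.ext_iff, coeff_zero, coeff_sum, coeff_monomial, ← sum_filter]
  refine ⟨fun h k₀ => h _, fun h m => ?_⟩
  obtain hempty | ⟨k₀, hk₀⟩ :=
    (univ.filter fun k : α → ι => tupleExponent k = m).eq_empty_or_nonempty
  · rw [hempty, sum_empty]
  · rw [← (mem_filter.mp hk₀).2]
    exact h k₀

theorem FreeMonoid.prod_ofFn_of {α : Type*} {d : ℕ} (k : Fin d → α) :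
    (List.ofFn fun j => FreeMonoid.of (k j)).prod = FreeMonoid.ofList (List.ofFn k) := by
  induction d with
  | zero => rfl
  | succ d ih => simp [List.ofFn_succ, ih, FreeMonoid.ofList_cons]

theorem sum_single_ofList_ofFn_eq_zero_iff {R α : Type*} [Semiring R] [Fintype α] {d : ℕ}
    (c : (Fin d → α) → R) :
    ∑ k, MonoidAlgebra.single (FreeMonoid.ofList (List.ofFn k)) (c k) = 0 ↔ ∀ k, c k = 0 := by
  refine ⟨fun h k => ?_, fun h => by simp [h]⟩
  have hword : Function.Injective fun k : Fin d → α => FreeMonoid.ofList (List.ofFn k) :=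
    FreeMonoid.ofList.injective.comp List.ofFn_injective
  classical
  simpa [MonoidAlgebra.coeff_sum, Finsupp.single_apply, hword.eq_iff] using
    congrArg (fun x => x.coeff (FreeMonoid.ofList (List.ofFn k))) h

theorem list_prod_ofFn_sum_single {R α : Type*} [CommSemiring R] [Fintype α] {d : ℕ}
    (b : Fin d → α → R) :
    (List.ofFn fun j => ∑ i, MonoidAlgebra.single (FreeMonoid.of i) (b j i)).prod
      = ∑ k : Fin d → α,
          MonoidAlgebra.single (FreeMonoid.ofList (List.ofFn k)) (∏ j, b j (k j)) := by
  let P := MultilinearMap.mkPiAlgebraFin R d (MonoidAlgebra R (FreeMonoid α))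
  have hword (k : Fin d → α) :
      (List.ofFn fun j => MonoidAlgebra.of R _ (FreeMonoid.of (k j))).prod
        = MonoidAlgebra.of R _ (FreeMonoid.ofList (List.ofFn k)) := by
    rw [← FreeMonoid.prod_ofFn_of, map_list_prod, List.map_ofFn]
    rfl
  calc (List.ofFn fun j => ∑ i, MonoidAlgebra.single (FreeMonoid.of i) (b j i)).prod
      = P fun j => ∑ i, b j i • MonoidAlgebra.of R _ (FreeMonoid.of i) := by
        simp [P]
    _ = ∑ k : Fin d → α, P fun j => b j (k j) • MonoidAlgebra.of R _ (FreeMonoid.of (k j)) :=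
        P.map_sum _
    _ = _ := sum_congr rfl fun k _ => by
        rw [P.map_smul_univ, MultilinearMap.mkPiAlgebraFin_apply, hword,
          MonoidAlgebra.of_apply, MonoidAlgebra.smul_single', mul_one]

section LinearForms

variable {F : Type*} [Field F] {n d s : ℕ}

theorem prod_lin (b : Fin d → Fin n → F) :
    ∏ j, lin (b j) = ∑ k : Fin d → Fin n, monomial (tupleExponent k) (∏ j, b j (k j)) := by
  simp only [lin, C_mul_X_eq_monomial]
  rw [Fintype.prod_sum]
  exact sum_congr rfl fun k _ => (monomial_sum_prod _ _ _).symm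

theorem list_prod_linNC (b : Fin d → Fin n → F) :
    (List.ofFn fun j => linNC (b j)).prod
      = ∑ k : Fin d → Fin n,
          MonoidAlgebra.single (FreeMonoid.ofList (List.ofFn k)) (∏ j, b j (k j)) :=
  list_prod_ofFn_sum_single b

def wordCoeff (a : Fin s → Fin d → Fin n → F) (k : Fin d → Fin n) : F :=
  ∑ i, ∏ j, a i j (k j)

theorem sum_prod_lin (a : Fin s → Fin d → Fin n → F) :
    ∑ i, ∏ j, lin (a i j) = ∑ k, monomial (tupleExponent k) (wordCoeff a k) := by
  simp_rw [prod_lin, wordCoeff, map_sum]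
  exact sum_comm

theorem sum_perm_prod_eq_sum_wordCoeff_comp (a : Fin s → Fin d → Fin n → F) (k : Fin d → Fin n) :
    ∑ i, ∑ σ : Perm (Fin d), ∏ j, a i (σ j) (k j) = ∑ σ : Perm (Fin d), wordCoeff a (k ∘ σ) := by
  rw [sum_comm, ← Equiv.sum_comp (Equiv.inv (Perm (Fin d)))]
  refine sum_congr rfl fun σ _ => sum_congr rfl fun i _ => ?_
  rw [← Equiv.prod_comp σ]
  simp

theorem sum_perm_list_prod_linNC (a : Fin s → Fin d → Fin n → F) :
    ∑ i, ∑ σ : Perm (Fin d), (List.ofFn fun j => linNC (a i (σ j))).prod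
      = ∑ k : Fin d → Fin n, MonoidAlgebra.single (FreeMonoid.ofList (List.ofFn k))
          (∑ σ : Perm (Fin d), wordCoeff a (k ∘ σ)) := by
  simp_rw [list_prod_linNC, ← sum_perm_prod_eq_sum_wordCoeff_comp,
    ← MonoidAlgebra.singleAddHom_apply, map_sum]
  exact (sum_congr rfl fun i _ => sum_comm).trans sum_comm

end LinearForms

theorem comm_zero_iff_noncomm_zero {F : Type*} [Field F] {n d s : ℕ}
    (hchar : ringChar F = 0 ∨ d < ringChar F)
    (a : Fin s → Fin d → Fin n → F) :
    (∑ i, ∏ j, lin (a i j)) = 0 ↔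
    (∑ i : Fin s, ∑ σ : Equiv.Perm (Fin d),
        (List.ofFn fun j => linNC (a i (σ j))).prod) = 0 := by
  rw [sum_prod_lin, sum_monomial_tupleExponent_eq_zero_iff, sum_perm_list_prod_linNC,
    sum_single_ofList_ofFn_eq_zero_iff]
  refine forall_congr' fun k => ?_
  have hfact := cast_prod_factorial_tupleExponent_ne_zero (by simpa using hchar) k
  rw [sum_perm_comp_eq_nsmul_sum, nsmul_eq_mul, mul_eq_zero_iff_left hfact]
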